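/- arXiv:2103.04063 — 4 statements merged into one kernel-verified Lean document; each statement's English description precedes it below -/
import Mathlib

section
/- Let μ be an infinite cardinal and S a set. If F ⊆ P(S) is a μ-free family with μ ≤ |F|, then |F|^{<μ} ≤ 2^{|S|}. -/
/-!
A point lying in one member `X` of a small subfamily `A ⊆ F` but in no other member of `A`
exists by `μ`-freeness, so `A` injects into `S`; hence every `ν < μ` with `ν ≤ |F|` satisfies
`ν ≤ |S|`. Since `|F| ≤ 2^|S|` and `S` is infinite, `|F|^ν ≤ (2^|S|)^|S| = 2^|S|`.
-/

open Cardinal Set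

universe u

/-- A family `F ⊆ 𝒫(S)` is `μ`-free if every Boolean combination of fewer than `μ`
members (intersection of one disjoint subfamily minus the union of another) is
nonempty.  By convention `⋂₀ ∅ = univ`. -/
def MuFree {S : Type u} (μ : Cardinal.{u}) (F : Set (Set S)) : Prop :=
  ∀ A B : Set (Set S), A ⊆ F → B ⊆ F → Disjoint A B → #A < μ → #B < μ →
    (⋂₀ A \ ⋃₀ B).Nonempty

namespace MuFree

variable {S : Type u} {μ : Cardinal.{u}} {F A : Set (Set S)}

theorem exists_mem_notMem_sUnion_diff (hfree : MuFree μ F) (hμ : 1 < μ) (hAF : A ⊆ F)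
    (hAμ : #A < μ) {X : Set S} (hX : X ∈ A) : ∃ s ∈ X, s ∉ ⋃₀ (A \ {X}) := by
  obtain ⟨s, hsX, hs⟩ := hfree {X} (A \ {X}) (singleton_subset_iff.2 (hAF hX))
    (sdiff_subset.trans hAF) (by simp) (by rwa [mk_singleton])
    ((mk_le_mk_of_subset sdiff_subset).trans_lt hAμ)
  exact ⟨s, by simpa using hsX, hs⟩

theorem mk_le_of_subset (hfree : MuFree μ F) (hμ : 1 < μ) (hAF : A ⊆ F) (hAμ : #A < μ) :
    #A ≤ #S := by
  choose f hfX hfA using fun X : A => hfree.exists_mem_notMem_sUnion_diff hμ hAF hAμ X.2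
  refine mk_le_of_injective (f := f) fun X Y hXY => Subtype.ext ?_
  by_contra hne
  exact hfA Y ⟨X, ⟨X.2, hne⟩, hXY ▸ hfX X⟩

end MuFree

theorem Cardinal.aleph0_le_of_aleph0_le_two_power {κ : Cardinal} (h : ℵ₀ ≤ 2 ^ κ) : ℵ₀ ≤ κ := by
  by_contra! hκ
  exact (power_lt_aleph0 (natCast_lt_aleph0 (n := 2)) hκ).not_ge h

theorem Cardinal.power_le_two_power_of_le {κ ν θ : Cardinal} (hκ : κ ≤ 2 ^ θ) (hθ : ℵ₀ ≤ θ)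
    (hν : ν ≤ θ) : κ ^ ν ≤ 2 ^ θ :=
  calc κ ^ ν ≤ (2 ^ θ) ^ ν := power_le_power_right hκ
    _ = 2 ^ (θ * ν) := power_mul.symm
    _ ≤ 2 ^ θ := power_le_power_left two_ne_zero <|
        (mul_le_mul_right hν θ).trans (mul_eq_self hθ).le

/-- If `μ` is infinite and `F ⊆ 𝒫(S)` is a `μ`-free family with
`μ ≤ |F|`, then `|F| ^ (< μ) ≤ 2 ^ |S|`. -/
theorem stmt_1 {S : Type u} (μ : Cardinal.{u}) (hμ : Cardinal.aleph0 ≤ μ)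
    (F : Set (Set S)) (hfree : MuFree μ F) (hcard : μ ≤ #F) :
    (#F) ^< μ ≤ 2 ^ #S := by
  have hF : #F ≤ 2 ^ #S := (mk_set_le F).trans_eq mk_set
  have hS : ℵ₀ ≤ #S := aleph0_le_of_aleph0_le_two_power (hμ.trans (hcard.trans hF))
  refine powerlt_le.2 fun ν hν => power_le_two_power_of_le hF hS ?_
  obtain ⟨A, hAF, rfl⟩ := le_mk_iff_exists_subset.1 (hν.le.trans hcard)
  exact hfree.mk_le_of_subset (one_lt_aleph0.trans_le hμ) hAF hν
end

section
/- Suppose F ⊆ P(κ) is a (μ,κ)-independent family with |F|^{<μ} ≤ κ. Then F is not maximal: there exists Y ⊆ κ such that F ∪ {Y} is a strictly larger (μ,κ)-independent family. Consequently, if the (μ,κ)-independence spectrum is nonempty, then κ < i_μ(κ)^{<μ}. -/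
open Cardinal Set

universe u

/-- A `(μ,κ)`-independent family: `μ`-free, and every Boolean combination of fewer
than `μ` members has cardinality `κ`. -/
def Indep {S : Type u} (μ κ : Cardinal.{u}) (F : Set (Set S)) : Prop :=
  MuFree μ F ∧
    ∀ A B : Set (Set S), A ⊆ F → B ⊆ F → Disjoint A B → #A < μ → #B < μ →
      #(⋂₀ A \ ⋃₀ B : Set S) = κ

/-! Each `< μ`-Boolean combination `⋂₀ A \ ⋃₀ B` of `F` has size `κ`, and there are at most
`|F|^{<μ} ≤ κ` of them. Choosing distinct points greedily along a well-order of type `κ`, we pick,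
for each combination, `κ` points tagged `true` and `κ` points tagged `false`, all distinct. The
set `Y` of points tagged `true` splits every combination into two pieces of size `κ`, which is
exactly what makes `insert Y F` independent. A maximal family admits no such `Y`, so it must
violate `|F|^{<μ} ≤ κ`. -/

open Function

theorem exists_injective_forall_mem_of_embedding {J O S : Type u} [LinearOrder O]
    [WellFoundedLT O] (e : J ↪ O) (T : J → Set S) (hT : ∀ j, #(Iio (e j)) < #(T j)) :
    ∃ y : J → S, Injective y ∧ ∀ j, y j ∈ T j := by
  have hwf : WellFounded (InvImage (· < ·) e) := InvImage.wf e wellFounded_lt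
  have step : ∀ j (g : ∀ i, e i < e j → S), ∃ x ∈ T j, ∀ i hi, g i hi ≠ x := by
    intro j g
    have hsmall : #(range fun i : {i // e i < e j} => g i i.2) < #(T j) :=
      mk_range_le.trans_lt <| (mk_le_of_injective (f := fun i : {i // e i < e j} =>
        (⟨e i, i.2⟩ : Iio (e j))) fun i i' h => Subtype.ext (e.injective
          (congrArg Subtype.val h))).trans_lt (hT j)
    obtain ⟨x, hx, hxg⟩ := not_subset.mp fun h => (mk_le_mk_of_subset h).not_gt hsmall
    exact ⟨x, hx, fun i hi h => hxg ⟨⟨i, hi⟩, h⟩⟩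
  choose pick hpick hfresh using step
  let y := hwf.fix pick
  have hy : ∀ j, y j = pick j fun i _ => y i := hwf.fix_eq pick
  refine ⟨y, fun i j hij => by_contra fun hne => ?_, fun j => hy j ▸ hpick _ _⟩
  rcases lt_or_gt_of_ne (e.injective.ne hne) with h | h
  · exact hfresh j _ i h (by rw [← hy, hij])
  · exact hfresh i _ j h (by rw [← hy, hij])

theorem exists_injective_forall_mem {J S : Type u} {κ : Cardinal.{u}} (hJ : #J ≤ κ)
    (T : J → Set S) (hT : ∀ j, κ ≤ #(T j)) : ∃ y : J → S, Injective y ∧ ∀ j, y j ∈ T j := by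
  obtain ⟨e⟩ : Nonempty (J ↪ κ.ord.ToType) := by rwa [← le_def, mk_ord_toType]
  exact exists_injective_forall_mem_of_embedding e T fun j =>
    (mk_Iio_lt _ (by simp)).trans_le ((mk_ord_toType κ).trans_le (hT j))

theorem exists_forall_mk_inter_eq_and_mk_diff_eq {ι S : Type u} {κ : Cardinal.{u}}
    (hκ : ℵ₀ ≤ κ) (hι : #ι ≤ κ) (X : ι → Set S) (hX : ∀ i, #(X i) = κ) :
    ∃ Y : Set S, ∀ i, #(X i ∩ Y : Set S) = κ ∧ #(X i \ Y : Set S) = κ := by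
  have hJ : #(ι × Bool × κ.ord.ToType) ≤ κ := calc
    #(ι × Bool × κ.ord.ToType) = #ι * (2 * κ) := by simp [mk_prod]
    _ ≤ κ * (κ * κ) := by gcongr; exact ofNat_le_aleph0.trans hκ
    _ = κ := by rw [mul_eq_self hκ, mul_eq_self hκ]
  obtain ⟨y, hyinj, hyX⟩ := exists_injective_forall_mem hJ (fun p => X p.1) fun p => (hX p.1).ge
  refine ⟨range fun p : ι × κ.ord.ToType => y (p.1, true, p.2), fun i => ?_⟩
  have hmem : ∀ b k,
      y (i, b, k) ∈ range (fun p : ι × κ.ord.ToType => y (p.1, true, p.2)) ↔ b = true :=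
    fun b k => ⟨fun ⟨p, hp⟩ => by simp_all [hyinj.eq_iff], by rintro rfl; exact ⟨(i, k), rfl⟩⟩
  have hlarge : ∀ b (Z : Set S), (∀ k, y (i, b, k) ∈ Z) → Z ⊆ X i → #Z = κ :=
    fun b Z hZ hZX => le_antisymm ((mk_le_mk_of_subset hZX).trans (hX i).le) <| calc
      κ = #(range fun k => y (i, b, k)) := by
        rw [mk_range_eq (fun k => y (i, b, k)) (hyinj.comp fun k k' h => by simpa using h),
          mk_ord_toType]
      _ ≤ #Z := mk_le_mk_of_subset (range_subset_iff.mpr hZ)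
  exact ⟨hlarge true _ (fun k => ⟨hyX (i, true, k), (hmem _ _).mpr rfl⟩) inter_subset_left,
    hlarge false _ (fun k => ⟨hyX (i, false, k), by simp [hmem]⟩) sdiff_subset⟩

theorem exists_mk_Iio_eq {μ c : Cardinal.{u}} (h : c < μ) : ∃ b : μ.ord.ToType, #(Iio b) = c := by
  have hc : c.ord < Ordinal.type (α := μ.ord.ToType) (· < ·) := by simpa using h
  refine ⟨Ordinal.enum (· < ·) ⟨c.ord, hc⟩, ?_⟩
  have h := Ordinal.card_typein (r := ((· < ·) : μ.ord.ToType → μ.ord.ToType → Prop))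
    (Ordinal.enum (· < ·) ⟨c.ord, hc⟩)
  rwa [Ordinal.typein_enum _ hc, card_ord, eq_comm] at h

theorem mk_subset_mk_lt_le_mul_powerlt {α : Type u} (s : Set α) (μ : Cardinal.{u}) :
    #{t : Set α // t ⊆ s ∧ #t < μ} ≤ μ * #s ^< μ := by
  let f : (Σ b : μ.ord.ToType, (Iio b → s)) → {t : Set α // t ⊆ s ∧ #t < μ} := fun p =>
    ⟨range fun c => (p.2 c : α), range_subset_iff.mpr fun c => (p.2 c).2,
      mk_range_le.trans_lt (by simpa using mk_Iio_lt p.1)⟩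
  have hf : Surjective f := by
    rintro ⟨t, hts, htμ⟩
    obtain ⟨b, hb⟩ := exists_mk_Iio_eq htμ
    obtain ⟨e⟩ := Cardinal.eq.mp hb
    refine ⟨⟨b, fun c => ⟨e c, hts (e c).2⟩⟩, Subtype.ext ?_⟩
    exact (e.surjective.range_comp Subtype.val).trans Subtype.range_coe
  calc #{t : Set α // t ⊆ s ∧ #t < μ}
      ≤ #(Σ b : μ.ord.ToType, (Iio b → s)) := mk_le_of_surjective hf
    _ = sum fun b : μ.ord.ToType => #s ^ #(Iio b) := by simp only [mk_sigma, power_def]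
    _ ≤ sum fun _ : μ.ord.ToType => #s ^< μ :=
      sum_le_sum _ _ fun b => le_powerlt _ (by simpa using mk_Iio_lt b)
    _ = μ * #s ^< μ := by rw [sum_const', mk_ord_toType]

theorem le_of_powerlt_le {a μ κ : Cardinal} (ha : 2 ≤ a) (h : a ^< μ ≤ κ) : μ ≤ κ := by
  by_contra! hκμ
  exact (cantor κ).not_ge <| calc
    2 ^ κ ≤ a ^ κ := power_le_power_right ha
    _ ≤ a ^< μ := le_powerlt a hκμ
    _ ≤ κ := h

theorem mk_subset_mk_lt_le_of_powerlt_le {α : Type u} {s : Set α} {μ κ : Cardinal.{u}}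
    (hκ : ℵ₀ ≤ κ) (h : #s ^< μ ≤ κ) : #{t : Set α // t ⊆ s ∧ #t < μ} ≤ κ := by
  rcases lt_or_ge #s ℵ₀ with hfin | hinf
  · calc #{t : Set α // t ⊆ s ∧ #t < μ} ≤ #(𝒫 s) := mk_subtype_mono fun t ht => ht.1
      _ = 2 ^ #s := mk_powerset s
      _ ≤ κ := (power_lt_aleph0 ofNat_lt_aleph0 hfin).le.trans hκ
  · calc #{t : Set α // t ⊆ s ∧ #t < μ} ≤ μ * #s ^< μ := mk_subset_mk_lt_le_mul_powerlt s μ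
      _ ≤ κ * κ := mul_le_mul' (le_of_powerlt_le (ofNat_le_aleph0.trans hinf) h) h
      _ = κ := mul_eq_self hκ

section Indep

variable {S : Type u} {μ κ : Cardinal.{u}} {F : Set (Set S)}

theorem indep_of_forall_mk_eq (hκ : κ ≠ 0)
    (h : ∀ A B : Set (Set S), A ⊆ F → B ⊆ F → Disjoint A B → #A < μ → #B < μ →
      #(⋂₀ A \ ⋃₀ B : Set S) = κ) : Indep μ κ F :=
  ⟨fun A B hA hB hAB hAμ hBμ => nonempty_coe_sort.mp <|
    mk_ne_zero_iff.mp ((h A B hA hB hAB hAμ hBμ).trans_ne hκ), h⟩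

theorem Indep.insert_of_splits {Y : Set S} (hF : Indep μ κ F) (hκ : κ ≠ 0)
    (hY : ∀ A B : Set (Set S), A ⊆ F → B ⊆ F → Disjoint A B → #A < μ → #B < μ →
      #((⋂₀ A \ ⋃₀ B) ∩ Y : Set S) = κ ∧ #((⋂₀ A \ ⋃₀ B) \ Y : Set S) = κ) :
    Indep μ κ (insert Y F) := by
  refine indep_of_forall_mk_eq hκ fun A B hA hB hAB hAμ hBμ => ?_
  by_cases hYA : Y ∈ A
  · have hYB : Y ∉ B := disjoint_left.mp hAB hYA
    have hsplit : ⋂₀ A = ⋂₀ (A \ {Y}) ∩ Y := by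
      rw [inter_comm, ← sInter_insert, insert_sdiff_self_of_mem hYA]
    rw [hsplit, inter_sdiff_right_comm]
    exact (hY (A \ {Y}) B (sdiff_singleton_subset_iff.mpr hA)
      ((subset_insert_iff_of_notMem hYB).mp hB) (hAB.mono_left sdiff_subset)
      ((mk_le_mk_of_subset sdiff_subset).trans_lt hAμ) hBμ).1
  by_cases hYB : Y ∈ B
  · have hsplit : ⋃₀ B = ⋃₀ (B \ {Y}) ∪ Y := by
      rw [union_comm, ← sUnion_insert, insert_sdiff_self_of_mem hYB]
    rw [hsplit, ← Set.sdiff_sdiff]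
    exact (hY A (B \ {Y}) ((subset_insert_iff_of_notMem hYA).mp hA)
      (sdiff_singleton_subset_iff.mpr hB) (hAB.mono_right sdiff_subset) hAμ
      ((mk_le_mk_of_subset sdiff_subset).trans_lt hBμ)).2
  exact hF.2 A B ((subset_insert_iff_of_notMem hYA).mp hA)
    ((subset_insert_iff_of_notMem hYB).mp hB) hAB hAμ hBμ

theorem Indep.exists_notMem_indep_insert (hμ : 1 < μ) (hκ : ℵ₀ ≤ κ) (hF : Indep μ κ F)
    (hsm : #F ^< μ ≤ κ) : ∃ Y, Y ∉ F ∧ Indep μ κ (insert Y F) := by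
  let Small := {A : Set (Set S) // A ⊆ F ∧ #A < μ}
  have hSmall : #Small ≤ κ := mk_subset_mk_lt_le_of_powerlt_le hκ hsm
  let ι := {p : Small × Small // Disjoint p.1.1 p.2.1}
  have hι : #ι ≤ κ := calc
    #ι ≤ #Small * #Small := by
      simpa only [mk_prod, lift_id] using mk_subtype_le (α := Small × Small) _
    _ ≤ κ * κ := mul_le_mul' hSmall hSmall
    _ = κ := mul_eq_self hκ
  obtain ⟨Y, hY⟩ := exists_forall_mk_inter_eq_and_mk_diff_eq hκ hι
    (fun p => ⋂₀ p.1.1.1 \ ⋃₀ p.1.2.1)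
    fun p => hF.2 _ _ p.1.1.2.1 p.1.2.2.1 p.2 p.1.1.2.2 p.1.2.2.2
  have hsplit : ∀ A B : Set (Set S), A ⊆ F → B ⊆ F → Disjoint A B → #A < μ → #B < μ →
      #((⋂₀ A \ ⋃₀ B) ∩ Y : Set S) = κ ∧ #((⋂₀ A \ ⋃₀ B) \ Y : Set S) = κ :=
    fun A B hA hB hAB hAμ hBμ => hY ⟨(⟨A, hA, hAμ⟩, ⟨B, hB, hBμ⟩), hAB⟩
  have hκ0 : κ ≠ 0 := (aleph0_pos.trans_le hκ).ne'
  refine ⟨Y, fun hYF => hκ0 ?_, hF.insert_of_splits hκ0 hsplit⟩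
  -- if `Y ∈ F`, the combination `Y \ Y` would have size `κ`
  simpa using (hsplit {Y} ∅ (singleton_subset_iff.mpr hYF) (empty_subset F) (disjoint_empty _)
    (by simpa using hμ) (by simpa using zero_lt_one.trans hμ)).2.symm

end Indep

theorem stmt_2_general {S : Type u} (μ κ : Cardinal.{u}) (hμ : μ.IsRegular)
    (hinf : Cardinal.aleph0 ≤ κ)
    (F : Set (Set S)) (hind : Indep μ κ F) (hsm : (#F) ^< μ ≤ κ) :
    (∃ Y : Set S, Y ∉ F ∧ Indep μ κ (insert Y F)) ∧
    (∀ G : Set (Set S), Indep μ κ G →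
      (∀ G' : Set (Set S), G ⊆ G' → MuFree μ G' → G' = G) → κ < (#G) ^< μ) := by
  have hμ1 : 1 < μ := by exact_mod_cast hμ.nat_lt 1
  refine ⟨hind.exists_notMem_indep_insert hμ1 hinf hsm,
    fun G hG hmax => lt_of_not_ge fun hG' => ?_⟩
  obtain ⟨Y, hYG, hYind⟩ := hG.exists_notMem_indep_insert hμ1 hinf hG'
  exact hYG (hmax _ (subset_insert Y G) hYind.1 ▸ mem_insert Y G)

/-- If `F ⊆ 𝒫(κ)` is a `(μ,κ)`-independent family with `|F|^{<μ} ≤ κ`,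
then `F` is not maximal: some `Y ∉ F` gives a strictly larger `(μ,κ)`-independent
family.  Consequently every `(μ,κ)`-maximal independent family `G` satisfies
`κ < |G|^{<μ}` (so `κ < 𝔦_μ(κ)^{<μ}` when the spectrum is nonempty). -/
theorem stmt_2 {S : Type u} (μ κ : Cardinal.{u}) (hμ : μ.IsRegular)
    (hκ : #S = κ) (hinf : Cardinal.aleph0 ≤ κ)
    (F : Set (Set S)) (hind : Indep μ κ F) (hsm : (#F) ^< μ ≤ κ) :
    (∃ Y : Set S, Y ∉ F ∧ Indep μ κ (insert Y F)) ∧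
    (∀ G : Set (Set S), Indep μ κ G →
      (∀ G' : Set (Set S), G ⊆ G' → MuFree μ G' → G' = G) → κ < (#G) ^< μ) :=
  stmt_2_general μ κ hμ hinf F hind hsm
end

section
/- Let F ⊆ P(κ) be a μ-free family of cardinality θ, with μ regular. Define the density ideal I_F as the set of Y ⊆ κ such that {p ∈ Add(μ,θ) : X_p ∩ Y = ∅} is dense in Add(μ,θ). Then I_F is a μ-complete ideal on κ. -/
/-!
Cohen forcing `Add(μ, I)` is `μ`-closed: a chain of fewer than `μ` conditions is bounded by the
union of its members, which is again a condition because `μ` is regular. In a `μ`-closed order,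
fewer than `μ` dense sets can be met one after the other along a well-ordered recursion, taking
upper bounds of the chain built so far at every stage. Applied to the dense sets
`{q | X_q ∩ Y = ∅}` for `Y` in a family of fewer than `μ` members of the ideal, this yields a
single extension `q` of any given condition below a witness for each `Y`; since `X` is antitone,
`X_q` misses the whole union.
-/

open Cardinal Set

universe u

/-- A condition of the Cohen forcing `Add(μ, I)`: a pair of disjoint subsets of the
index set `I`, both of cardinality `< μ` (the positive and negative coordinates of a
partial function `I → 2` of size `< μ`). -/
structure AddCond (μ : Cardinal.{u}) (I : Type u) where
  pos : Set I
  neg : Set I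
  disj : Disjoint pos neg
  posSmall : #pos < μ
  negSmall : #neg < μ

/-- `q` extends (is stronger than) `p`. -/
def AddLe {μ : Cardinal.{u}} {I : Type u} (q p : AddCond μ I) : Prop :=
  p.pos ⊆ q.pos ∧ p.neg ⊆ q.neg

/-- The Boolean combination of the family `f` coded by the condition `p`:
`X_p = ⋂_{i ∈ pos} f i \ ⋃_{i ∈ neg} f i`. -/
def XInd {μ : Cardinal.{u}} {I : Type u} {S : Type u} (f : I → Set S)
    (p : AddCond μ I) : Set S :=
  (⋂ i ∈ p.pos, f i) \ ⋃ i ∈ p.neg, f i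

/-- The density ideal of the family `f`: `Y` belongs to it iff the set of conditions
`p` with `X_p ∩ Y = ∅` is dense in `Add(μ, I)`. -/
def densityIdeal {I : Type u} {S : Type u} (μ : Cardinal.{u}) (f : I → Set S) :
    Set (Set S) :=
  {Y | ∀ p : AddCond μ I, ∃ q : AddCond μ I, AddLe q p ∧ XInd f q ∩ Y = ∅}

section SmallChains

/-- `μ`-closedness, in the convention where stronger elements are larger. -/
def SmallChainsBddAbove (μ : Cardinal.{u}) (P : Type u) [Preorder P] : Prop :=
  ∀ s : Set P, IsChain (· ≤ ·) s → #s < μ → BddAbove s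

variable {μ : Cardinal.{u}} {P : Type u} [Preorder P]

theorem SmallChainsBddAbove.exists_ge_mem_upperBounds (hP : SmallChainsBddAbove μ P)
    {s : Set P} (hs : IsChain (· ≤ ·) s) (hsμ : #s < μ) {p : P} (hp : p ∈ lowerBounds s) :
    ∃ q, p ≤ q ∧ q ∈ upperBounds s := by
  rcases s.eq_empty_or_nonempty with rfl | ⟨a, ha⟩
  · exact ⟨p, le_rfl, by simp⟩
  · obtain ⟨q, hq⟩ := hP s hs hsμ
    exact ⟨q, (hp ha).trans (hq ha), hq⟩

open Classical in
/-- Junk value `p` when no upper bound of `s` lies above `p`. -/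
noncomputable def boundAbove (p : P) (s : Set P) : P :=
  if h : ∃ q, p ≤ q ∧ q ∈ upperBounds s then h.choose else p

theorem boundAbove_spec {p : P} {s : Set P} (h : ∃ q, p ≤ q ∧ q ∈ upperBounds s) :
    p ≤ boundAbove p s ∧ boundAbove p s ∈ upperBounds s := by
  rw [boundAbove, dif_pos h]
  exact h.choose_spec

section WellOrdered

variable {ι : Type u} [LinearOrder ι] [WellFoundedLT ι]

noncomputable def meetCofinalChain (D : ι → Set P) (hD : ∀ i x, ∃ y ∈ D i, x ≤ y) (p : P) :
    ι → P :=
  WellFoundedLT.fix fun i A => (hD i (boundAbove p (range fun j : Iio i => A j j.2))).choose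

variable {D : ι → Set P} {hD : ∀ i x, ∃ y ∈ D i, x ≤ y} {p : P}

theorem meetCofinalChain_spec (i : ι) :
    meetCofinalChain D hD p i ∈ D i ∧
      boundAbove p (range fun j : Iio i => meetCofinalChain D hD p j) ≤
        meetCofinalChain D hD p i := by
  have heq : meetCofinalChain D hD p i = _ := WellFoundedLT.fix_eq _ i
  rw [heq]
  exact Classical.choose_spec (hD i _)

theorem SmallChainsBddAbove.meetCofinalChain_le (hP : SmallChainsBddAbove μ P) (hι : #ι < μ)
    (i : ι) : p ≤ meetCofinalChain D hD p i ∧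
      ∀ j < i, meetCofinalChain D hD p j ≤ meetCofinalChain D hD p i := by
  induction i using WellFoundedLT.induction with
  | _ i IH =>
  set A := meetCofinalChain D hD p
  have hchain : IsChain (· ≤ ·) (range fun j : Iio i => A j) := by
    rintro _ ⟨⟨j, hj⟩, rfl⟩ _ ⟨⟨k, hk⟩, rfl⟩ -
    rcases lt_trichotomy j k with hjk | rfl | hkj
    · exact Or.inl ((IH k hk).2 j hjk)
    · exact Or.inl le_rfl
    · exact Or.inr ((IH j hj).2 k hkj)
  obtain ⟨hpb, hb⟩ := boundAbove_spec <| hP.exists_ge_mem_upperBounds hchain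
    (mk_range_le.trans_lt ((mk_set_le _).trans_lt hι))
    (by rintro _ ⟨⟨j, hj⟩, rfl⟩; exact (IH j hj).1)
  have hbA := (meetCofinalChain_spec (hD := hD) (p := p) i).2
  exact ⟨hpb.trans hbA, fun j hj => (hb ⟨⟨j, hj⟩, rfl⟩).trans hbA⟩

end WellOrdered

theorem SmallChainsBddAbove.exists_ge_forall_exists_mem_le (hP : SmallChainsBddAbove μ P)
    {ι : Type u} (hι : #ι < μ) (D : ι → Set P)
    (hD : ∀ i x, ∃ y ∈ D i, x ≤ y) (p : P) : ∃ q, p ≤ q ∧ ∀ i, ∃ a ∈ D i, a ≤ q := by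
  obtain ⟨_, _⟩ := exists_wellFoundedLT ι
  have hA := hP.meetCofinalChain_le (D := D) (hD := hD) (p := p) hι
  have hmono : Monotone (meetCofinalChain D hD p) :=
    monotone_iff_forall_lt.mpr fun i j hij => (hA j).2 i hij
  obtain ⟨q, hpq, hq⟩ := hP.exists_ge_mem_upperBounds hmono.isChain_range
    (mk_range_le.trans_lt hι) (by rintro _ ⟨i, rfl⟩; exact (hA i).1)
  exact ⟨q, hpq, fun i => ⟨_, (meetCofinalChain_spec i).1, hq ⟨i, rfl⟩⟩⟩

end SmallChains

namespace AddCond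

variable {μ : Cardinal.{u}} {I : Type u}

/-- `p ≤ q` means that `q` extends `p`, so dense sets are cofinal and `μ`-closedness is
boundedness above of small chains. -/
instance : Preorder (AddCond μ I) where
  le p q := AddLe q p
  le_refl _ := ⟨subset_rfl, subset_rfl⟩
  le_trans _ _ _ hpq hqr := ⟨hpq.1.trans hqr.1, hpq.2.trans hqr.2⟩

theorem antitone_XInd {S : Type u} (f : I → Set S) : Antitone (XInd f : AddCond μ I → Set S) :=
  fun _ _ h => sdiff_subset_sdiff (biInter_mono h.1 fun _ _ => subset_rfl)
    (biUnion_subset_biUnion_left h.2)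

theorem disjoint_biUnion_pos_biUnion_neg {s : Set (AddCond μ I)} (hs : IsChain (· ≤ ·) s) :
    Disjoint (⋃ a ∈ s, a.pos) (⋃ a ∈ s, a.neg) := by
  simp only [disjoint_iUnion_left, disjoint_iUnion_right]
  intro a ha b hb
  rcases hs.total ha hb with h | h
  · exact b.disj.mono_right h.2
  · exact a.disj.mono_left h.1

theorem smallChainsBddAbove (hμ : μ.IsRegular) : SmallChainsBddAbove μ (AddCond μ I) := by
  intro s hs hsμ
  refine ⟨⟨⋃ a ∈ s, a.pos, ⋃ a ∈ s, a.neg, disjoint_biUnion_pos_biUnion_neg hs,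
    (card_biUnion_lt_iff_forall_of_isRegular hμ hsμ).mpr fun a _ => a.posSmall,
    (card_biUnion_lt_iff_forall_of_isRegular hμ hsμ).mpr fun a _ => a.negSmall⟩, ?_⟩
  intro a ha
  exact ⟨subset_biUnion_of_mem (u := AddCond.pos) ha, subset_biUnion_of_mem (u := AddCond.neg) ha⟩

end AddCond

theorem stmt_5_general {I : Type u} {S : Type u} (μ : Cardinal.{u}) (hμ : μ.IsRegular)
    (f : I → Set S) :
    (∅ : Set S) ∈ densityIdeal μ f ∧
    (∀ Y Z : Set S, Y ∈ densityIdeal μ f → Z ⊆ Y → Z ∈ densityIdeal μ f) ∧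
    (∀ 𝒴 : Set (Set S), 𝒴 ⊆ densityIdeal μ f → #𝒴 < μ →
      ⋃₀ 𝒴 ∈ densityIdeal μ f) := by
  refine ⟨fun p => ⟨p, le_refl p, inter_empty _⟩, fun Y Z hY hZY p => ?_, fun 𝒴 h𝒴 h𝒴μ p => ?_⟩
  · obtain ⟨q, hpq, hqY⟩ := hY p
    exact ⟨q, hpq, subset_empty_iff.mp (hqY ▸ inter_subset_inter_right _ hZY)⟩
  · obtain ⟨q, hpq, hq⟩ := (AddCond.smallChainsBddAbove hμ).exists_ge_forall_exists_mem_le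
      h𝒴μ (fun Y : 𝒴 => {a | XInd f a ∩ Y = ∅})
      (fun Y a => let ⟨b, hab, hbY⟩ := h𝒴 Y.2 a; ⟨b, hbY, hab⟩) p
    refine ⟨q, hpq, ?_⟩
    simp only [sUnion_eq_biUnion, inter_iUnion₂, iUnion_eq_empty]
    intro Y hY
    obtain ⟨a, haY, haq⟩ := hq ⟨Y, hY⟩
    exact subset_empty_iff.mp (haY ▸ inter_subset_inter_left _ (AddCond.antitone_XInd f haq))

/-- For a `μ`-free family `F = {f i : i ∈ I} ⊆ 𝒫(κ)` (`μ` regular), the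
density ideal `I_F` is a `μ`-complete ideal on `κ`: it contains `∅`, is closed under
subsets, and is closed under unions of fewer than `μ` of its members. -/
theorem stmt_5 {I : Type u} {S : Type u} (μ : Cardinal.{u}) (hμ : μ.IsRegular)
    (f : I → Set S) (hinj : Function.Injective f)
    (hfree : ∀ p : AddCond μ I, (XInd f p).Nonempty) :
    (∅ : Set S) ∈ densityIdeal μ f ∧
    (∀ Y Z : Set S, Y ∈ densityIdeal μ f → Z ⊆ Y → Z ∈ densityIdeal μ f) ∧
    (∀ 𝒴 : Set (Set S), 𝒴 ⊆ densityIdeal μ f → #𝒴 < μ →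
      ⋃₀ 𝒴 ∈ densityIdeal μ f) :=
  stmt_5_general μ hμ f
end

section
/- Suppose μ is regular, θ ≥ μ, and F is a maximal μ-free family of cardinality θ ≥ μ of subsets of some set S. Then for some cardinal κ, there is a (μ,κ)-densely maximal independent family of cardinality θ, where κ = min{|X_q| : q ≤ p*} for the condition p* below which F restricts to a densely maximal family. In particular θ ∈ sp_i(μ,κ). -/
open Cardinal Set

universe u

/-- The Boolean combination of `A`, `B` relative to the ambient set `Z`
(the convention `⋂∅ = Z`). -/
def RBComb {S : Type u} (Z : Set S) (A B : Set (Set S)) : Set S :=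
  (Z ∩ ⋂₀ A) \ ⋃₀ B

/-- `μ`-freeness relative to an ambient set `Z`. -/
def RelMuFree {S : Type u} (μ : Cardinal.{u}) (Z : Set S) (G : Set (Set S)) : Prop :=
  ∀ A B : Set (Set S), A ⊆ G → B ⊆ G → Disjoint A B → #A < μ → #B < μ →
    (RBComb Z A B).Nonempty

/-!
A condition `p = (P, Q)` (disjoint, fewer than `μ` members of `F` each) codes `X_p = ⋂ P \ ⋃ Q`.
If `F` were densely maximal below no condition, every condition would have an extension `p` carrying
a set `W ⊆ X_p` that splits `X_r` for every extension `r` of `p`. Gluing these witnesses along a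
maximal antichain of such `p` gives one set `B` splitting every `X_p`. Then `insert B F` is
`μ`-free, so `B ∈ F` by maximality; but `B` does not split `X_({B}, ∅) ⊆ B`.

Below a condition where `F` is densely maximal, pick `q` with `|X_q| = κ` minimal. On the members of
`F` not mentioned by `q`, the map `Y ↦ Y ∩ X_q` is injective by freeness, and the Boolean
combinations of the traces are exactly the sets `X_r` with `r` extending `q`. Hence they all have
size `κ`, dense maximality passes to the traces, and dense maximality implies maximality.
-/

lemma mk_sdiff_eq_of_mk_lt {α : Type u} {s t : Set α} (hs : ℵ₀ ≤ #s) (h : #t < #s) :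
    #(s \ t : Set α) = #s := by
  refine (mk_le_mk_of_subset sdiff_subset).antisymm (not_lt.1 fun hlt => ?_)
  exact (le_mk_sdiff_add_mk s t).not_gt (add_lt_of_lt hs hlt h)

lemma exists_maximal_pairwise {α : Type*} (D : Set α) (R : α → α → Prop) :
    ∃ 𝒜, Maximal (fun 𝒜 => 𝒜 ⊆ D ∧ 𝒜.Pairwise R) 𝒜 :=
  zorn_subset _ fun c hc hchain => ⟨⋃₀ c, ⟨sUnion_subset fun _ hs => (hc hs).1,
    (pairwise_sUnion hchain.directedOn).2 fun _ hs => (hc hs).2⟩,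
    fun _ hs => subset_sUnion_of_mem hs⟩

namespace FreeFamily

variable {S : Type u} {μ : Cardinal.{u}} {Z W Y : Set S} {F G : Set (Set S)}
  {b p q r : Set (Set S) × Set (Set S)}

/-- A condition `p = (P, Q)` of `Add(μ, F)` codes `X_p = ⋂ P \ ⋃ Q`. Conditions are ordered
by inclusion, so `p ≤ r` means that `r` extends `p`: the reverse of the forcing order. -/
structure IsCond (μ : Cardinal.{u}) (F : Set (Set S)) (p : Set (Set S) × Set (Set S)) :
    Prop where
  fst_subset : p.1 ⊆ F
  snd_subset : p.2 ⊆ F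
  disjoint : Disjoint p.1 p.2
  mk_fst_lt : #p.1 < μ
  mk_snd_lt : #p.2 < μ

def comb (Z : Set S) (p : Set (Set S) × Set (Set S)) : Set S := RBComb Z p.1 p.2

def DenselyMaximal (μ : Cardinal.{u}) (Z : Set S) (F : Set (Set S))
    (b : Set (Set S) × Set (Set S)) : Prop :=
  ∀ p, IsCond μ F p → b ≤ p → ∀ E ⊆ comb Z p,
    ∃ r, IsCond μ F r ∧ p ≤ r ∧ (comb Z r ∩ E = ∅ ∨ comb Z r ⊆ E)

def Splits (μ : Cardinal.{u}) (Z : Set S) (F : Set (Set S)) (p : Set (Set S) × Set (Set S))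
    (W : Set S) : Prop :=
  ∀ r, IsCond μ F r → p ≤ r → (comb Z r ∩ W).Nonempty ∧ (comb Z r \ W).Nonempty

lemma comb_bot : comb Z ⊥ = Z := by
  simp [comb, RBComb]

lemma comb_subset : comb Z p ⊆ Z := fun _ hx => hx.1.1

lemma comb_eq_inter : comb Z p = Z ∩ comb univ p := by
  simp only [comb, RBComb, univ_inter, inter_sdiff_assoc]

lemma comb_sup : comb Z (p ⊔ q) = comb Z p ∩ comb Z q := by
  ext x
  simp only [comb, RBComb, Prod.fst_sup, Prod.snd_sup, sup_eq_union, sUnion_union, sInter_union,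
    mem_sdiff, mem_inter_iff, mem_union]
  tauto

lemma comb_antitone : Antitone (comb (S := S) Z) := fun p q h => by
  rw [← sup_eq_right.2 h, comb_sup]
  exact inter_subset_left

lemma comb_insert_fst (A B : Set (Set S)) : comb Z (insert Y A, B) = comb Z (A, B) ∩ Y := by
  ext x
  simp only [comb, RBComb, sInter_insert, mem_sdiff, mem_inter_iff]
  tauto

lemma comb_insert_snd (A B : Set (Set S)) : comb Z (A, insert Y B) = comb Z (A, B) \ Y := by
  ext x
  simp only [comb, RBComb, sUnion_insert, mem_sdiff, mem_union]
  tauto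

lemma comb_eq_empty_of_not_disjoint (h : ¬ Disjoint p.1 p.2) : comb Z p = ∅ := by
  obtain ⟨Y, hY1, hY2⟩ := not_disjoint_iff.1 h
  exact eq_empty_of_forall_notMem fun x hx => hx.2 ⟨Y, hY2, hx.1.2 Y hY1⟩

lemma disjoint_comb_of_not_disjoint_sup (h : ¬ Disjoint (p ⊔ q).1 (p ⊔ q).2) :
    Disjoint (comb Z p) (comb Z q) := by
  rw [disjoint_iff_inter_eq_empty, ← comb_sup]
  exact comb_eq_empty_of_not_disjoint h

lemma comb_comb : comb (comb Z q) p = comb Z (q ⊔ p) := by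
  rw [comb_eq_inter (Z := comb Z q), comb_sup, comb_eq_inter (Z := Z) (p := p), ← inter_assoc,
    inter_eq_left.2 comb_subset]

lemma comb_image_inter (A B : Set (Set S)) :
    comb Z ((· ∩ Z) '' A, (· ∩ Z) '' B) = comb Z (A, B) := by
  ext x
  simp only [comb, RBComb, sInter_image, sUnion_image, mem_sdiff, mem_inter_iff, mem_iInter,
    mem_iUnion, exists_prop]
  grind

lemma isCond_bot (hμ : ℵ₀ ≤ μ) : IsCond μ F ⊥ where
  fst_subset := empty_subset F
  snd_subset := empty_subset F
  disjoint := disjoint_bot_left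
  mk_fst_lt := (mk_eq_zero (∅ : Set (Set S))).trans_lt (aleph0_pos.trans_le hμ)
  mk_snd_lt := (mk_eq_zero (∅ : Set (Set S))).trans_lt (aleph0_pos.trans_le hμ)

namespace IsCond

lemma mono (hp : IsCond μ F p) (h : F ⊆ G) : IsCond μ G p :=
  ⟨hp.fst_subset.trans h, hp.snd_subset.trans h, hp.disjoint, hp.mk_fst_lt, hp.mk_snd_lt⟩

lemma sup (hμ : ℵ₀ ≤ μ) (hp : IsCond μ F p) (hq : IsCond μ F q)
    (h : Disjoint (p ⊔ q).1 (p ⊔ q).2) : IsCond μ F (p ⊔ q) :=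
  ⟨union_subset hp.fst_subset hq.fst_subset, union_subset hp.snd_subset hq.snd_subset, h,
    (mk_union_le _ _).trans_lt (add_lt_of_lt hμ hp.mk_fst_lt hq.mk_fst_lt),
    (mk_union_le _ _).trans_lt (add_lt_of_lt hμ hp.mk_snd_lt hq.mk_snd_lt)⟩

lemma insert_fst (hμ : ℵ₀ ≤ μ) (hp : IsCond μ F p) (hY : Y ∈ F) (hY' : Y ∉ p.2) :
    IsCond μ F (insert Y p.1, p.2) :=
  ⟨insert_subset hY hp.fst_subset, hp.snd_subset,
    disjoint_insert_left.2 ⟨hY', hp.disjoint⟩,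
    mk_insert_le.trans_lt (add_lt_of_lt hμ hp.mk_fst_lt (one_lt_aleph0.trans_le hμ)),
    hp.mk_snd_lt⟩

lemma insert_snd (hμ : ℵ₀ ≤ μ) (hp : IsCond μ F p) (hY : Y ∈ F) (hY' : Y ∉ p.1) :
    IsCond μ F (p.1, insert Y p.2) :=
  ⟨hp.fst_subset, insert_subset hY hp.snd_subset,
    disjoint_insert_right.2 ⟨hY', hp.disjoint⟩, hp.mk_fst_lt,
    mk_insert_le.trans_lt (add_lt_of_lt hμ hp.mk_snd_lt (one_lt_aleph0.trans_le hμ))⟩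

end IsCond

protected lemma _root_.RelMuFree.nonempty_comb (h : RelMuFree μ Z F) (hp : IsCond μ F p) :
    (comb Z p).Nonempty :=
  h p.1 p.2 hp.fst_subset hp.snd_subset hp.disjoint hp.mk_fst_lt hp.mk_snd_lt

lemma relMuFree_univ_iff : RelMuFree μ univ F ↔ MuFree μ F := by
  simp only [RelMuFree, MuFree, RBComb, univ_inter]

lemma not_splits_bot_of_mem (hμ : ℵ₀ ≤ μ) (hY : Y ∈ F) : ¬ Splits μ Z F ⊥ Y := fun h => by
  obtain ⟨x, hx, hxY⟩ := (h _ ((isCond_bot hμ).insert_fst hμ hY (notMem_empty Y)) bot_le).2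
  rw [comb_insert_fst] at hx
  exact hxY hx.2

lemma Splits.relMuFree_insert (h : Splits μ Z F ⊥ Y) : RelMuFree μ Z (insert Y F) := by
  intro A B hA hB hAB hAμ hBμ
  have hp : IsCond μ F (A \ {Y}, B \ {Y}) :=
    ⟨sdiff_singleton_subset_iff.2 hA, sdiff_singleton_subset_iff.2 hB,
      hAB.mono sdiff_subset sdiff_subset, (mk_le_mk_of_subset sdiff_subset).trans_lt hAμ,
      (mk_le_mk_of_subset sdiff_subset).trans_lt hBμ⟩
  obtain ⟨⟨x, hx⟩, ⟨y, hy⟩⟩ := h _ hp bot_le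
  by_cases hYB : Y ∈ B
  · have hle : (A, B) ≤ (A \ {Y}, insert Y (B \ {Y})) :=
      ⟨subset_sdiff_singleton subset_rfl fun hYA => hAB.ne_of_mem hYA hYB rfl,
        subset_insert_sdiff_singleton Y B⟩
    refine ⟨y, comb_antitone hle ?_⟩
    rwa [comb_insert_snd]
  · have hle : (A, B) ≤ (insert Y (A \ {Y}), B \ {Y}) :=
      ⟨subset_insert_sdiff_singleton Y A, subset_sdiff_singleton subset_rfl hYB⟩
    refine ⟨x, comb_antitone hle ?_⟩
    rwa [comb_insert_fst]

lemma exists_splits_bot (hμ : ℵ₀ ≤ μ)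
    (hdense : ∀ b, IsCond μ F b → ∃ p, IsCond μ F p ∧ b ≤ p ∧ ∃ W, Splits μ Z F p W) :
    ∃ B, Splits μ Z F ⊥ B := by
  obtain ⟨𝒜, h𝒜⟩ := exists_maximal_pairwise {p | IsCond μ F p ∧ ∃ W, Splits μ Z F p W}
    fun p q => ¬ Disjoint (p ⊔ q).1 (p ⊔ q).2
  choose W hW using fun q (hq : q ∈ 𝒜) => (h𝒜.1.1 hq).2
  -- the pieces `W q ∩ X_q` lie in pairwise disjoint sets, so `B` agrees with `W q` on `X_q`
  refine ⟨⋃ q, ⋃ hq : q ∈ 𝒜, W q hq ∩ comb Z q, fun r hr _ => ?_⟩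
  obtain ⟨p, hp, hrp, hpD⟩ := hdense r hr
  obtain ⟨q, hq, hpq⟩ : ∃ q ∈ 𝒜, Disjoint (p ⊔ q).1 (p ⊔ q).2 := by
    by_contra! hinc
    have hp𝒜 : p ∈ 𝒜 := h𝒜.mem_of_prop_insert ⟨insert_subset ⟨hp, hpD⟩ h𝒜.1.1,
      pairwise_insert.2 ⟨h𝒜.1.2,
        fun q hq _ => ⟨hinc q hq, by simpa only [sup_comm] using hinc q hq⟩⟩⟩
    exact hinc p hp𝒜 (by simpa only [sup_idem] using hp.disjoint)
  have hm : IsCond μ F (p ⊔ q) := hp.sup hμ (h𝒜.1.1 hq).1 hpq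
  have hmr : comb Z (p ⊔ q) ⊆ comb Z r := comb_antitone (hrp.trans le_sup_left)
  have hmq : comb Z (p ⊔ q) ⊆ comb Z q := comb_antitone le_sup_right
  obtain ⟨⟨x, hx, hxW⟩, ⟨y, hy, hyW⟩⟩ := hW q hq _ hm le_sup_right
  refine ⟨⟨x, hmr hx, mem_iUnion₂.2 ⟨q, hq, hxW, hmq hx⟩⟩, ⟨y, hmr hy, ?_⟩⟩
  simp only [mem_iUnion, not_exists]
  intro q' hq' hy'
  obtain rfl : q' = q := by
    by_contra hne
    exact disjoint_left.1 (disjoint_comb_of_not_disjoint_sup (h𝒜.1.2 hq' hq hne)) hy'.2 (hmq hy)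
  exact hyW hy'.1

lemma exists_denselyMaximal (hμ : ℵ₀ ≤ μ) (hmax : ∀ B : Set S, MuFree μ (insert B F) → B ∈ F) :
    ∃ b, IsCond μ F b ∧ DenselyMaximal μ univ F b := by
  by_contra! h
  simp only [DenselyMaximal] at h
  push Not at h
  obtain ⟨B, hB⟩ := exists_splits_bot hμ fun b hb => by
    obtain ⟨p, hp, hbp, E, -, hE⟩ := h b hb
    exact ⟨p, hp, hbp, E, fun r hr hpr => ⟨(hE r hr hpr).1, sdiff_nonempty.2 (hE r hr hpr).2⟩⟩
  exact not_splits_bot_of_mem hμ (hmax B (relMuFree_univ_iff.1 hB.relMuFree_insert)) hB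

lemma exists_forall_mk_comb_eq (hb : IsCond μ F b) :
    ∃ q, IsCond μ F q ∧ b ≤ q ∧ ∀ r, IsCond μ F r → q ≤ r → #(comb Z r) = #(comb Z q) := by
  obtain ⟨q, ⟨hq, hbq⟩, hmin⟩ := (InvImage.wf (fun p => #(comb Z p)) Cardinal.lt_wf).has_min
    {p | IsCond μ F p ∧ b ≤ p} ⟨b, hb, le_rfl⟩
  exact ⟨q, hq, hbq, fun r hr hqr => (mk_le_mk_of_subset (comb_antitone hqr)).antisymm
    (not_lt.1 (hmin r ⟨hr, hbq.trans hqr⟩))⟩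

def restrict (Z : Set S) (F : Set (Set S)) (q : Set (Set S) × Set (Set S)) : Set (Set S) :=
  (· ∩ comb Z q) '' (F \ (q.1 ∪ q.2))

def trace (Z : Set S) (q r : Set (Set S) × Set (Set S)) : Set (Set S) × Set (Set S) :=
  ((· ∩ comb Z q) '' (r \ q).1, (· ∩ comb Z q) '' (r \ q).2)

lemma trace_mono : Monotone (trace Z q) := fun _ _ h =>
  ⟨image_mono (sdiff_le_sdiff_right h).1, image_mono (sdiff_le_sdiff_right h).2⟩

lemma comb_trace (h : q ≤ r) : comb (comb Z q) (trace Z q r) = comb Z r := by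
  rw [trace, comb_image_inter, comb_comb]
  exact congrArg _ (sup_sdiff_cancel_right h)

lemma IsCond.sdiff_fst_subset (hr : IsCond μ F r) (h : q ≤ r) : (r \ q).1 ⊆ F \ (q.1 ∪ q.2) :=
  fun _ hY => ⟨hr.fst_subset hY.1,
    fun hq => hq.elim hY.2 fun hq2 => hr.disjoint.ne_of_mem hY.1 (h.2 hq2) rfl⟩

lemma IsCond.sdiff_snd_subset (hr : IsCond μ F r) (h : q ≤ r) : (r \ q).2 ⊆ F \ (q.1 ∪ q.2) :=
  fun _ hY => ⟨hr.snd_subset hY.1,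
    fun hq => hq.elim (fun hq1 => hr.disjoint.ne_of_mem (h.1 hq1) hY.1 rfl) hY.2⟩

lemma injOn_inter_comb (hμ : ℵ₀ ≤ μ) (hfree : RelMuFree μ Z F) (hq : IsCond μ F q) :
    InjOn (· ∩ comb Z q) (F \ (q.1 ∪ q.2)) := by
  intro Y hY Y' hY' hYY'
  by_contra hne
  have hr : IsCond μ F (insert Y q.1, insert Y' q.2) :=
    (hq.insert_fst hμ hY.1 fun h => hY.2 (Or.inr h)).insert_snd hμ hY'.1
      fun h => h.elim (fun h => hne h.symm) fun h => hY'.2 (Or.inl h)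
  obtain ⟨x, hx⟩ := hfree.nonempty_comb hr
  rw [comb_insert_snd, comb_insert_fst] at hx
  have hYY' : Y ∩ comb Z q = Y' ∩ comb Z q := hYY'
  exact hx.2 (hYY' ▸ ⟨hx.1.2, hx.1.1⟩ : x ∈ Y' ∩ comb Z q).1

lemma isCond_trace (hμ : ℵ₀ ≤ μ) (hfree : RelMuFree μ Z F) (hq : IsCond μ F q)
    (hr : IsCond μ F r) (h : q ≤ r) : IsCond μ (restrict Z F q) (trace Z q r) where
  fst_subset := image_mono (hr.sdiff_fst_subset h)
  snd_subset := image_mono (hr.sdiff_snd_subset h)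
  disjoint := by
    rw [disjoint_iff_inter_eq_empty, trace, ← (injOn_inter_comb hμ hfree hq).image_inter
      (hr.sdiff_fst_subset h) (hr.sdiff_snd_subset h),
      (hr.disjoint.mono (sdiff_le : r \ q ≤ r).1 (sdiff_le : r \ q ≤ r).2).inter_eq, image_empty]
  mk_fst_lt := mk_image_le.trans_lt ((mk_le_mk_of_subset sdiff_subset).trans_lt hr.mk_fst_lt)
  mk_snd_lt := mk_image_le.trans_lt ((mk_le_mk_of_subset sdiff_subset).trans_lt hr.mk_snd_lt)

lemma exists_trace_eq (hμ : ℵ₀ ≤ μ) (hfree : RelMuFree μ Z F) (hq : IsCond μ F q)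
    (hp : IsCond μ (restrict Z F q) p) :
    ∃ r, IsCond μ F r ∧ q ≤ r ∧ trace Z q r = p := by
  obtain ⟨P, Q⟩ := p
  have hinj := injOn_inter_comb hμ hfree hq
  obtain ⟨A, hA, rfl⟩ := subset_image_iff.1 hp.fst_subset
  obtain ⟨B, hB, rfl⟩ := subset_image_iff.1 hp.snd_subset
  have hFq : Disjoint (F \ (q.1 ∪ q.2)) (q.1 ∪ q.2) := disjoint_sdiff_left
  have hAq : Disjoint (A, B) q :=
    Prod.disjoint_iff.2 ⟨hFq.mono hA subset_union_left, hFq.mono hB subset_union_right⟩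
  have hAB : IsCond μ F (A, B) :=
    ⟨hA.trans sdiff_subset, hB.trans sdiff_subset, hp.disjoint.of_image,
      (mk_image_eq_of_injOn _ _ (hinj.mono hA)) ▸ hp.mk_fst_lt,
      (mk_image_eq_of_injOn _ _ (hinj.mono hB)) ▸ hp.mk_snd_lt⟩
  refine ⟨q ⊔ (A, B), hq.sup hμ hAB ?_, le_sup_left, ?_⟩
  · exact disjoint_union_left.2
      ⟨disjoint_union_right.2 ⟨hq.disjoint, (hFq.mono hB subset_union_left).symm⟩,
        disjoint_union_right.2 ⟨hFq.mono hA subset_union_right, hAB.disjoint⟩⟩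
  · rw [trace, sup_sdiff_left_self, hAq.sdiff_eq_left]

lemma mk_restrict (hμ : ℵ₀ ≤ μ) (hfree : RelMuFree μ Z F) (hq : IsCond μ F q)
    (hF : μ ≤ #F) : #(restrict Z F q) = #F := by
  rw [restrict, mk_image_eq_of_injOn _ _ (injOn_inter_comb hμ hfree hq)]
  exact mk_sdiff_eq_of_mk_lt (hμ.trans hF) ((mk_union_le _ _).trans_lt
    (add_lt_of_lt hμ hq.mk_fst_lt hq.mk_snd_lt) |>.trans_le hF)

lemma DenselyMaximal.restrict (hμ : ℵ₀ ≤ μ) (hfree : RelMuFree μ Z F) (hq : IsCond μ F q)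
    (hDM : DenselyMaximal μ Z F q) :
    DenselyMaximal μ (comb Z q) (restrict Z F q) ⊥ := by
  intro p hp _ E hE
  obtain ⟨r, hr, hqr, rfl⟩ := exists_trace_eq hμ hfree hq hp
  rw [comb_trace hqr] at hE
  obtain ⟨r', hr', hrr', hr'E⟩ := hDM r hr hqr E hE
  refine ⟨trace Z q r', isCond_trace hμ hfree hq hr' (hqr.trans hrr'), trace_mono hrr', ?_⟩
  rwa [comb_trace (hqr.trans hrr')]

lemma DenselyMaximal.mem_of_relMuFree_insert (hμ : ℵ₀ ≤ μ) (hG : DenselyMaximal μ Z G ⊥)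
    (hWZ : W ⊆ Z) (hW : RelMuFree μ Z (insert W G)) : W ∈ G := by
  by_contra hWG
  obtain ⟨p, hp, -, hpW⟩ := hG ⊥ (isCond_bot hμ) le_rfl W (comb_bot.symm ▸ hWZ)
  have hp' := hp.mono (subset_insert W G)
  rcases hpW with hdisj | hsub
  · obtain ⟨x, hx⟩ := hW.nonempty_comb
      (hp'.insert_fst hμ (mem_insert W G) fun h => hWG (hp.snd_subset h))
    rw [comb_insert_fst] at hx
    exact hdisj.subset hx
  · obtain ⟨x, hx⟩ := hW.nonempty_comb
      (hp'.insert_snd hμ (mem_insert W G) fun h => hWG (hp.fst_subset h))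
    rw [comb_insert_snd] at hx
    exact hx.2 (hsub hx.1)

end FreeFamily

open FreeFamily in
/-- if `μ` is regular and `F` is a maximal `μ`-free family of
cardinality `θ ≥ μ` of subsets of `S`, then for some cardinal `κ` there is a
`(μ,κ)`-densely maximal independent family of cardinality `θ`, consisting of subsets
of an ambient set `Z` of size `κ`: all relative Boolean combinations have size `κ`,
dense maximality holds, and the family is maximal among `μ`-free families on `Z`;
in particular `θ ∈ sp_𝔦(μ,κ)`. -/
theorem stmt_19 {S : Type u} (μ θ : Cardinal.{u}) (hμ : μ.IsRegular) (hθ : μ ≤ θ)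
    (F : Set (Set S)) (hcard : #F = θ) (hfree : MuFree μ F)
    (hmax : ∀ B : Set S, MuFree μ (insert B F) → B ∈ F) :
    ∃ (κ : Cardinal.{u}) (Z : Set S) (G : Set (Set S)),
      #Z = κ ∧ #G = θ ∧ (∀ X ∈ G, X ⊆ Z) ∧
      (∀ A B : Set (Set S), A ⊆ G → B ⊆ G → Disjoint A B → #A < μ → #B < μ →
        #(RBComb Z A B) = κ) ∧
      (∀ A B : Set (Set S), A ⊆ G → B ⊆ G → Disjoint A B → #A < μ → #B < μ →
        ∀ E ⊆ RBComb Z A B, ∃ A' B' : Set (Set S), A ⊆ A' ∧ B ⊆ B' ∧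
          A' ⊆ G ∧ B' ⊆ G ∧ Disjoint A' B' ∧ #A' < μ ∧ #B' < μ ∧
          (RBComb Z A' B' ∩ E = ∅ ∨ RBComb Z A' B' ⊆ E)) ∧
      (∀ W : Set S, W ⊆ Z → RelMuFree μ Z (insert W G) → W ∈ G) := by
  have hμ₀ := hμ.aleph0_le
  have hfree' : RelMuFree μ univ F := relMuFree_univ_iff.2 hfree
  obtain ⟨b, hb, hDM⟩ := exists_denselyMaximal hμ₀ hmax
  obtain ⟨q, hq, hbq, hsize⟩ := exists_forall_mk_comb_eq (Z := univ) hb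
  have hDMG : DenselyMaximal μ (comb univ q) (restrict univ F q) ⊥ :=
    DenselyMaximal.restrict hμ₀ hfree' hq fun p hp hqp => hDM p hp (hbq.trans hqp)
  refine ⟨_, comb univ q, restrict univ F q, rfl, hcard ▸ mk_restrict hμ₀ hfree' hq (hcard ▸ hθ),
    fun _ ⟨_, _, hX⟩ => hX ▸ inter_subset_right, fun A B hA hB hAB hAμ hBμ => ?_,
    fun A B hA hB hAB hAμ hBμ E hE => ?_,
    fun W hWZ hW => hDMG.mem_of_relMuFree_insert hμ₀ hWZ hW⟩
  · obtain ⟨r, hr, hqr, hrAB⟩ :=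
      exists_trace_eq hμ₀ hfree' hq (p := (A, B)) ⟨hA, hB, hAB, hAμ, hBμ⟩
    change #(comb _ (A, B)) = _
    rw [← hrAB, comb_trace hqr, hsize r hr hqr]
  · obtain ⟨p, hp, hle, hpE⟩ := hDMG (A, B) ⟨hA, hB, hAB, hAμ, hBμ⟩ bot_le E hE
    exact ⟨p.1, p.2, hle.1, hle.2, hp.fst_subset, hp.snd_subset, hp.disjoint, hp.mk_fst_lt,
      hp.mk_snd_lt, hpE⟩
end
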